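/- Let G be a profinite group and let M₀ ← M₁ ← M₂ ← ⋯ be a tower of discrete G-modules with inverse limit M = lim_i M_i (with the inverse-limit topology and componentwise G-action). For a topological G-module N, let (X^*(G;N))^G denote the continuous homogeneous cochain complex whose n-th term is the group of G-fixed points of C(G^{n+1}, N) under the action ((g · f)(g₁, …, g_{n+1})) = g · f(g⁻¹g₁, …, g⁻¹g_{n+1}), with differential (d f)(g₀, …, g_{n+1}) = Σ_{i=0}^{n+1} (−1)^i f(g₀, …, ĝ_i, …, g_{n+1}); its s-th cohomology is the continuous cochain cohomology H^s_cts(G;N). Then for every s ≥ 0 there is an isomorphism of abelian groups H^s_cts(G; M) ≅ H^s[ lim_i ((X^*(G;M_i))^G) ], where the complex lim_i ((X^*(G;M_i))^G) has n-th term lim_i (C(G^{n+1}, M_i)^G) and the differentials induced by those of the complexes (X^*(G;M_i))^G. -/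

import Mathlib

set_option linter.unusedSectionVars false

universe u

/-- Any additive group with the discrete topology is a topological additive group. -/
instance (priority := 100) discreteTopologicalAddGroup
    {A : Type*} [AddGroup A] [TopologicalSpace A] [DiscreteTopology A] :
    IsTopologicalAddGroup A := ⟨⟩

variable (G : Type u) [Group G] [TopologicalSpace G] [IsTopologicalGroup G]
  [CompactSpace G] [T2Space G] [TotallyDisconnectedSpace G]

/-- The homogeneous differential
`(d f)(g₀, …, g_{n+1}) = ∑_{i=0}^{n+1} (-1)^i f (g₀, …, ĝ_i, …, g_{n+1})` for continuous
homogeneous cochains valued in a topological abelian group `N`. -/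
def dHomogeneous {N : Type*} [AddCommGroup N] [TopologicalSpace N] [IsTopologicalAddGroup N]
    (n : ℕ) (f : C((Fin (n + 1) → G), N)) : (Fin (n + 2) → G) → N := fun t =>
  ∑ i : Fin (n + 2), ((-1 : ℤ) ^ (i : ℕ)) • f (fun j => t (i.succAbove j))

section Tower

-- A tower `M₀ ← M₁ ← M₂ ← ⋯` of discrete `G`-modules, with `G`-equivariant additive
-- transition maps `φ i : M (i+1) →+ M i`.
variable (M : ℕ → Type u) [∀ i, AddCommGroup (M i)] [∀ i, TopologicalSpace (M i)]
  [∀ i, DiscreteTopology (M i)] [∀ i, DistribMulAction G (M i)]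
  [∀ i, ContinuousSMul G (M i)]
  (φ : ∀ i : ℕ, M (i + 1) →+ M i)
  (hφ : ∀ (i : ℕ) (g : G) (m : M (i + 1)), φ i (g • m) = g • φ i m)

/-- The inverse limit `lim_i M_i` of the tower, as the additive subgroup of `∏ i, M i`
of compatible sequences; its topology is the subspace topology of the product of the
discrete spaces `M i`. -/
def towerLimit : AddSubgroup (∀ i, M i) where
  carrier := {s | ∀ i, φ i (s (i + 1)) = s i}
  zero_mem' := by intro i; simp
  add_mem' := by intro a b ha hb i; simp [ha i, hb i]
  neg_mem' := by intro a ha i; simp [ha i]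

/-- The componentwise `G`-action on the inverse limit `lim_i M_i`. -/
def towerLimitSMul (g : G) (s : towerLimit M φ) : towerLimit M φ :=
  ⟨fun i => g • (s : ∀ i, M i) i, fun i => by
    rw [hφ i g ((s : ∀ i, M i) (i + 1)), s.2 i]⟩

lemma towerLimitSMul_add (g : G) (x y : towerLimit M φ) :
    towerLimitSMul G M φ hφ g (x + y)
      = towerLimitSMul G M φ hφ g x + towerLimitSMul G M φ hφ g y := by
  apply Subtype.ext
  funext i
  exact smul_add g _ _

lemma towerLimitSMul_neg (g : G) (x : towerLimit M φ) :
    towerLimitSMul G M φ hφ g (-x) = -towerLimitSMul G M φ hφ g x := by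
  apply Subtype.ext
  funext i
  exact smul_neg g _

lemma towerLimitSMul_zero (g : G) :
    towerLimitSMul G M φ hφ g 0 = 0 := by
  apply Subtype.ext
  funext i
  exact smul_zero g

/-- The `G`-equivariance (fixed point) condition on a continuous homogeneous cochain
valued in `lim_i M_i`, for the action
`(g • f)(g₁, …, g_{n+1}) = g • f (g⁻¹g₁, …, g⁻¹g_{n+1})`. -/
def IsEquivariantLimit (n : ℕ) (f : C((Fin (n + 1) → G), towerLimit M φ)) : Prop :=
  ∀ (g : G) (t : Fin (n + 1) → G),
    towerLimitSMul G M φ hφ g (f (fun i => g⁻¹ * t i)) = f t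

/-- The `s`-cocycles of the continuous homogeneous cochain complex
`(X^*(G; lim_i M_i))^G`. -/
def limitCocycles (s : ℕ) : AddSubgroup C((Fin (s + 1) → G), towerLimit M φ) where
  carrier := {f | IsEquivariantLimit G M φ hφ s f ∧ ∀ t, dHomogeneous G s f t = 0}
  zero_mem' := by
    refine ⟨fun g t => towerLimitSMul_zero G M φ hφ g, fun t => by simp [dHomogeneous]⟩
  add_mem' := by
    rintro a b ⟨ha1, ha2⟩ ⟨hb1, hb2⟩
    constructor
    · intro g t
      rw [ContinuousMap.add_apply, towerLimitSMul_add G M φ hφ, ha1 g t, hb1 g t]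
      rfl
    · intro t
      have : dHomogeneous G s (a + b) t = dHomogeneous G s a t + dHomogeneous G s b t := by
        simp [dHomogeneous, smul_add, Finset.sum_add_distrib]
      rw [this, ha2 t, hb2 t, add_zero]
  neg_mem' := by
    rintro a ⟨ha1, ha2⟩
    constructor
    · intro g t
      rw [ContinuousMap.neg_apply, towerLimitSMul_neg G M φ hφ, ha1 g t]
      rfl
    · intro t
      have : dHomogeneous G s (-a) t = -dHomogeneous G s a t := by
        simp [dHomogeneous, Finset.sum_neg_distrib]
      rw [this, ha2 t, neg_zero]

/-- The `s`-coboundaries of the continuous homogeneous cochain complex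
`(X^*(G; lim_i M_i))^G`. -/
def limitCoboundaries : (s : ℕ) → AddSubgroup C((Fin (s + 1) → G), towerLimit M φ)
  | 0 => ⊥
  | k + 1 => AddSubgroup.closure
      {f | ∃ h : C((Fin (k + 1) → G), towerLimit M φ),
        IsEquivariantLimit G M φ hφ k h ∧ ∀ t, f t = dHomogeneous G k h t}

/-- `H^s_cts(G; lim_i M_i)`: the `s`-th cohomology of the continuous homogeneous
cochain complex of the topological `G`-module `lim_i M_i`. -/
def limitCohomology (s : ℕ) : Type u :=
  limitCocycles G M φ hφ s ⧸
    ((limitCoboundaries G M φ hφ s).addSubgroupOf (limitCocycles G M φ hφ s))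

instance (s : ℕ) : AddCommGroup (limitCohomology G M φ hφ s) :=
  inferInstanceAs (AddCommGroup (limitCocycles G M φ hφ s ⧸
    ((limitCoboundaries G M φ hφ s).addSubgroupOf (limitCocycles G M φ hφ s))))

/-- `lim_i ((X^n(G; M_i))^G)`: the subgroup of `∏ i, C(G^{n+1}, M_i)` of compatible
sequences of `G`-fixed cochains. -/
def limitOfFixedPoints (n : ℕ) : AddSubgroup (∀ i, C((Fin (n + 1) → G), M i)) where
  carrier := {F | (∀ (i : ℕ) (g : G) (t : Fin (n + 1) → G),
      g • F i (fun j => g⁻¹ * t j) = F i t) ∧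
    (∀ (i : ℕ) (t : Fin (n + 1) → G), φ i (F (i + 1) t) = F i t)}
  zero_mem' := by constructor <;> intro i <;> simp
  add_mem' := by
    rintro a b ⟨ha1, ha2⟩ ⟨hb1, hb2⟩
    constructor
    · intro i g t; simp [smul_add, ha1 i g t, hb1 i g t]
    · intro i t; simp [ha2 i t, hb2 i t]
  neg_mem' := by
    rintro a ⟨ha1, ha2⟩
    constructor
    · intro i g t; simp [smul_neg, ha1 i g t]
    · intro i t; simp [ha2 i t]

/-- The `s`-cocycles of the complex `lim_i ((X^*(G; M_i))^G)`, whose differentials are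
induced componentwise by those of the complexes `(X^*(G; M_i))^G`. -/
def limitOfFixedPointsCocycles (s : ℕ) : AddSubgroup (∀ i, C((Fin (s + 1) → G), M i)) where
  carrier := {F | F ∈ limitOfFixedPoints G M φ s ∧ ∀ (i : ℕ) t, dHomogeneous G s (F i) t = 0}
  zero_mem' := by
    refine ⟨AddSubgroup.zero_mem _, fun i t => by simp [dHomogeneous]⟩
  add_mem' := by
    rintro a b ⟨ha1, ha2⟩ ⟨hb1, hb2⟩
    refine ⟨AddSubgroup.add_mem _ ha1 hb1, fun i t => ?_⟩
    have : dHomogeneous G s ((a + b) i) t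
        = dHomogeneous G s (a i) t + dHomogeneous G s (b i) t := by
      simp [dHomogeneous, smul_add, Finset.sum_add_distrib]
    rw [this, ha2 i t, hb2 i t, add_zero]
  neg_mem' := by
    rintro a ⟨ha1, ha2⟩
    refine ⟨AddSubgroup.neg_mem _ ha1, fun i t => ?_⟩
    have : dHomogeneous G s ((-a) i) t = -dHomogeneous G s (a i) t := by
      simp [dHomogeneous, Finset.sum_neg_distrib]
    rw [this, ha2 i t, neg_zero]

/-- The `s`-coboundaries of the complex `lim_i ((X^*(G; M_i))^G)`. -/
def limitOfFixedPointsCoboundaries : (s : ℕ) → AddSubgroup (∀ i, C((Fin (s + 1) → G), M i))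
  | 0 => ⊥
  | k + 1 => AddSubgroup.closure
      {F | ∃ H : ∀ i, C((Fin (k + 1) → G), M i), H ∈ limitOfFixedPoints G M φ k ∧
        ∀ (i : ℕ) t, F i t = dHomogeneous G k (H i) t}

/-- `H^s [lim_i ((X^*(G; M_i))^G)]`: the `s`-th cohomology of the complex
`lim_i ((X^*(G; M_i))^G)`. -/
def limitOfFixedPointsCohomology (s : ℕ) : Type u :=
  limitOfFixedPointsCocycles G M φ s ⧸
    ((limitOfFixedPointsCoboundaries G M φ s).addSubgroupOf
      (limitOfFixedPointsCocycles G M φ s))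

instance (s : ℕ) : AddCommGroup (limitOfFixedPointsCohomology G M φ s) :=
  inferInstanceAs (AddCommGroup (limitOfFixedPointsCocycles G M φ s ⧸
    ((limitOfFixedPointsCoboundaries G M φ s).addSubgroupOf
      (limitOfFixedPointsCocycles G M φ s))))

/-! A continuous map into `lim_i M_i` is the same thing as a compatible family of continuous
maps into the `M_i`, and under this identification both the `G`-action and the homogeneous
differential are computed componentwise. So `(X^*(G; lim_i M_i))^G` embeds into
`∏_i (X^*(G; M_i))^G` with image `lim_i ((X^*(G; M_i))^G)`, carrying cocycles onto cocycles
and coboundaries onto coboundaries. -/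

noncomputable def quotientAddSubgroupOfEquivOfInjective {A B : Type*} [AddCommGroup A]
    [AddCommGroup B] (e : A →+ B) (he : Function.Injective e) {Z K : AddSubgroup A}
    {Z' K' : AddSubgroup B} (hZ : Z.map e = Z') (hK : K.map e = K') :
    Z ⧸ K.addSubgroupOf Z ≃+ Z' ⧸ K'.addSubgroupOf Z' := by
  subst hZ hK
  refine QuotientAddGroup.congr _ _ (Z.equivMapOfInjective e he) ?_
  ext ⟨y, hy⟩
  simp only [AddSubgroup.mem_map, AddSubgroup.mem_addSubgroupOf]
  constructor
  · rintro ⟨x, hx, hxy⟩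
    exact ⟨x, hx, congrArg Subtype.val hxy⟩
  · rintro ⟨b, hb, rfl⟩
    exact ⟨⟨b, by obtain ⟨z, hz, hzb⟩ := hy; rwa [← he hzb]⟩, hb, rfl⟩

lemma continuous_dHomogeneous {Γ N : Type*} [TopologicalSpace Γ] [AddCommGroup N]
    [TopologicalSpace N] [IsTopologicalAddGroup N] (n : ℕ) (f : C((Fin (n + 1) → Γ), N)) :
    Continuous (dHomogeneous Γ n f) :=
  continuous_finsetSum _ fun _ _ =>
    (f.continuous.comp (continuous_pi fun _ => continuous_apply _)).zsmul _

section TowerComponents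

variable {N : ℕ → Type*} [∀ i, AddCommGroup (N i)] [∀ i, TopologicalSpace (N i)]
  [∀ i, IsTopologicalAddGroup (N i)] (ψ : ∀ i, N (i + 1) →+ N i)

def towerComponents (X : Type*) [TopologicalSpace X] :
    C(X, towerLimit N ψ) →+ ∀ i, C(X, N i) where
  toFun f i := ⟨fun t => (f t : ∀ j, N j) i,
    (continuous_apply i).comp (continuous_subtype_val.comp f.continuous)⟩
  map_zero' := rfl
  map_add' _ _ := rfl

variable {X : Type*} [TopologicalSpace X]

@[simp]
lemma towerComponents_apply (f : C(X, towerLimit N ψ)) (i : ℕ) (t : X) :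
    towerComponents ψ X f i t = (f t : ∀ j, N j) i :=
  rfl

lemma towerComponents_injective : Function.Injective (towerComponents ψ X) :=
  fun f g hfg => by
    ext t i
    exact DFunLike.congr_fun (congrFun hfg i) t

lemma mem_range_towerComponents_iff (F : ∀ i, C(X, N i)) :
    F ∈ (towerComponents ψ X).range ↔ ∀ (i : ℕ) (t : X), ψ i (F (i + 1) t) = F i t := by
  constructor
  · rintro ⟨f, rfl⟩ i t
    exact (f t).2 i
  · intro hF
    exact ⟨⟨fun t => ⟨fun i => F i t, fun i => hF i t⟩,
      (continuous_pi fun i => (F i).continuous).subtype_mk _⟩, rfl⟩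

lemma towerComponents_dHomogeneous {Γ : Type*} [TopologicalSpace Γ] (n : ℕ)
    (f : C((Fin (n + 1) → Γ), towerLimit N ψ)) (i : ℕ) (t : Fin (n + 2) → Γ) :
    ((dHomogeneous Γ n f t : towerLimit N ψ) : ∀ j, N j) i
      = dHomogeneous Γ n (towerComponents ψ _ f i) t := by
  simp only [dHomogeneous, AddSubmonoidClass.coe_finsetSum, Finset.sum_apply]
  rfl

end TowerComponents

section Cochains

omit [IsTopologicalGroup G] [CompactSpace G] [T2Space G] [TotallyDisconnectedSpace G]
  [∀ i, ContinuousSMul G (M i)]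

lemma towerComponents_mem_limitOfFixedPoints_iff (n : ℕ)
    (f : C((Fin (n + 1) → G), towerLimit M φ)) :
    towerComponents φ _ f ∈ limitOfFixedPoints G M φ n ↔ IsEquivariantLimit G M φ hφ n f :=
  ⟨fun hf g t => Subtype.ext (funext fun i => hf.1 i g t),
    fun hf => ⟨fun i g t => congrFun (congrArg Subtype.val (hf g t)) i, fun i t => (f t).2 i⟩⟩

lemma limitOfFixedPoints_le_range (n : ℕ) :
    limitOfFixedPoints G M φ n ≤ (towerComponents φ _).range :=
  fun F hF => (mem_range_towerComponents_iff φ F).2 hF.2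

lemma map_limitCoboundaries (n : ℕ) :
    (limitCoboundaries G M φ hφ n).map (towerComponents φ _)
      = limitOfFixedPointsCoboundaries G M φ n := by
  cases n with
  | zero => simp [limitCoboundaries, limitOfFixedPointsCoboundaries]
  | succ k =>
    rw [limitCoboundaries, limitOfFixedPointsCoboundaries, AddMonoidHom.map_closure]
    congr 1
    ext F
    constructor
    · rintro ⟨f, ⟨h, hh, hfh⟩, rfl⟩
      refine ⟨towerComponents φ _ h,
        (towerComponents_mem_limitOfFixedPoints_iff G M φ hφ k h).2 hh, fun i t => ?_⟩
      rw [towerComponents_apply, hfh, towerComponents_dHomogeneous]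
    · rintro ⟨H, hH, hFH⟩
      obtain ⟨h, rfl⟩ := limitOfFixedPoints_le_range G M φ k hH
      refine ⟨⟨dHomogeneous G k h, continuous_dHomogeneous k h⟩,
        ⟨h, (towerComponents_mem_limitOfFixedPoints_iff G M φ hφ k h).1 hH, fun _ => rfl⟩, ?_⟩
      ext i t
      exact (towerComponents_dHomogeneous φ k h i t).trans (hFH i t).symm

end Cochains

lemma towerComponents_mem_limitOfFixedPointsCocycles_iff (n : ℕ)
    (f : C((Fin (n + 1) → G), towerLimit M φ)) :
    towerComponents φ _ f ∈ limitOfFixedPointsCocycles G M φ n ↔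
      f ∈ limitCocycles G M φ hφ n := by
  have hcocycle : (∀ i t, dHomogeneous G n (towerComponents φ _ f i) t = 0) ↔
      ∀ t, dHomogeneous G n f t = 0 := by
    simp only [← towerComponents_dHomogeneous, ← ZeroMemClass.coe_eq_zero, funext_iff]
    exact forall_comm
  exact and_congr (towerComponents_mem_limitOfFixedPoints_iff G M φ hφ n f) hcocycle

lemma map_limitCocycles (n : ℕ) :
    (limitCocycles G M φ hφ n).map (towerComponents φ _)
      = limitOfFixedPointsCocycles G M φ n := by
  have hcomap : limitCocycles G M φ hφ n =
      (limitOfFixedPointsCocycles G M φ n).comap (towerComponents φ _) := by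
    ext f
    exact (towerComponents_mem_limitOfFixedPointsCocycles_iff G M φ hφ n f).symm
  rw [hcomap, AddSubgroup.map_comap_eq_self]
  exact fun F hF => limitOfFixedPoints_le_range G M φ n hF.1

/-- Let `G` be a profinite group and `M₀ ← M₁ ← M₂ ← ⋯` a tower of discrete `G`-modules
with inverse limit `M = lim_i M_i` (inverse-limit topology, componentwise `G`-action).
Then for every `s ≥ 0` there is an isomorphism of abelian groups
`H^s_cts(G; M) ≅ H^s [lim_i ((X^*(G; M_i))^G)]`, where `H^s_cts` is computed from the
continuous homogeneous cochain complex of the topological `G`-module `M`, and the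
second complex has `n`-th term `lim_i ((X^n(G; M_i))^G)` with the differentials induced
by those of the complexes `(X^*(G; M_i))^G`. -/
theorem limitCohomology_addEquiv_limitOfFixedPointsCohomology (s : ℕ) :
    Nonempty (limitCohomology G M φ hφ s ≃+ limitOfFixedPointsCohomology G M φ s) :=
  ⟨quotientAddSubgroupOfEquivOfInjective (towerComponents φ _)
    (towerComponents_injective φ) (map_limitCocycles G M φ hφ s)
    (map_limitCoboundaries G M φ hφ s)⟩

end Tower
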